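/- arXiv:2408.06898 — 2 statements merged into one kernel-verified Lean document; each statement's English description precedes it below -/
import Mathlib

section
/- For every N > 0 there exists x > N with 1 − cosh x · cos x = 0; that is, the function A(x) = 1 − cosh x · cos x has infinitely many positive roots. -/
/-- the set of positive roots of A(x) = 1 − cosh x · cos x is unbounded above:
for every N > 0 there exists x > N with 1 − cosh x cos x = 0. -/
theorem Afun_roots_unbounded :
    ∀ N : ℝ, 0 < N → ∃ x : ℝ, N < x ∧ 1 - Real.cosh x * Real.cos x = 0 := by
  intro N hN
  obtain ⟨n, hn⟩ := exists_nat_gt N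
  set a : ℝ := n * (2 * Real.pi) with ha
  set b : ℝ := a + Real.pi / 2 with hb
  have hpi := Real.pi_gt_three
  have hNa : N < a := by
    have hn1 : (1:ℝ) ≤ n := by
      have : (0:ℝ) < n := lt_trans hN hn
      exact_mod_cast Nat.one_le_iff_ne_zero.mpr (by exact_mod_cast this.ne')
    calc N < n := hn
    _ = n * 1 := by ring
    _ ≤ n * (2 * Real.pi) := by nlinarith
  have hab : a ≤ b := by simp [hb]; linarith
  have hcont : ContinuousOn (fun x => 1 - Real.cosh x * Real.cos x) (Set.Icc a b) :=
    (continuous_const.sub (Real.continuous_cosh.mul Real.continuous_cos)).continuousOn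
  have hfa : 1 - Real.cosh a * Real.cos a ≤ 0 := by
    have : Real.cos a = 1 := Real.cos_nat_mul_two_pi n
    rw [this, mul_one]
    have : (1:ℝ) ≤ Real.cosh a := Real.one_le_cosh a
    linarith
  have hfb : 0 ≤ 1 - Real.cosh b * Real.cos b := by
    have : Real.cos b = 0 := by
      rw [hb, ha]
      rw [show (n:ℝ) * (2 * Real.pi) + Real.pi / 2 = Real.pi / 2 + n * (2 * Real.pi) by ring]
      rw [Real.cos_add_nat_mul_two_pi, Real.cos_pi_div_two]
    rw [this, mul_zero]; norm_num
  have := intermediate_value_Icc hab hcont ⟨hfa, hfb⟩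
  obtain ⟨x, hx, hfx⟩ := this
  exact ⟨x, lt_of_lt_of_le hNa hx.1, hfx⟩
end

section
/- Consider the 2N × 2N SSH-type tridiagonal matrix H(v,w) with zero diagonal and alternating off-diagonal entries v, w, v, w, ..., v (N entries equal to v in odd positions, N−1 equal to w), with v, w real, v ≠ 0, w ≠ 0. If |v| < |w|, then H(v,w) has an eigenvalue λ_N with |λ_N| ≤ C·(|v|/|w|)^N for some constant C independent of N; in particular, as N → ∞ the smallest singular value of H(v,w) tends to 0. -/
open Module

/-- The 2N×2N SSH-type tridiagonal matrix with zero diagonal and alternating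
off-diagonal entries v, w, v, w, …, v (entry between sites k and k+1 is v for even k,
w for odd k, 0-indexed). -/
def sshMatrix (N : ℕ) (v w : ℝ) : Matrix (Fin (2 * N)) (Fin (2 * N)) ℝ :=
  Matrix.of fun i j =>
    if (i : ℕ) + 1 = (j : ℕ) ∨ (j : ℕ) + 1 = (i : ℕ) then
      (if (min (i : ℕ) (j : ℕ)) % 2 = 0 then v else w)
    else 0

/-!
Since `v + w r = 0` for `r = -v / w`, the vector with amplitude `r ^ k` on the first site of the
`k`-th cell and `0` on the second sites is annihilated by every row of the SSH matrix except the
last, where the missing neighbour leaves the residual `v r ^ (N - 1)`, of size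
`|w| (|v| / |w|) ^ N`.
For a symmetric matrix, expanding in an orthonormal eigenbasis shows that the smallest
eigenvalue in absolute value is at most `‖A x‖ / ‖x‖`, and so is the smallest singular value.
-/

open Matrix Module.End

theorem LinearMap.IsSymmetric.exists_hasEigenvalue_abs_mul_norm_le {𝕜 E : Type*} [RCLike 𝕜]
    [NormedAddCommGroup E] [InnerProductSpace 𝕜 E] [FiniteDimensional 𝕜 E] [Nontrivial E]
    {T : E →ₗ[𝕜] E} (hT : T.IsSymmetric) (x : E) :
    ∃ μ : ℝ, HasEigenvalue T μ ∧ |μ| * ‖x‖ ≤ ‖T x‖ := by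
  have hn : finrank 𝕜 E ≠ 0 := finrank_pos.ne'
  set b := hT.eigenvectorBasis rfl
  set μ := hT.eigenvalues rfl
  obtain ⟨i, -, hi⟩ := Finset.exists_min_image Finset.univ (fun j => |μ j|)
    ⟨⟨0, Nat.pos_of_ne_zero hn⟩, Finset.mem_univ _⟩
  refine ⟨μ i, hT.hasEigenvalue_eigenvalues rfl i, ?_⟩
  have hsq : (|μ i| * ‖x‖) ^ 2 ≤ ‖T x‖ ^ 2 := by
    rw [← b.repr.norm_map x, ← b.repr.norm_map (T x), mul_pow, EuclideanSpace.norm_sq_eq,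
      EuclideanSpace.norm_sq_eq, Finset.mul_sum]
    refine Finset.sum_le_sum fun j _ => ?_
    rw [hT.eigenvectorBasis_apply_self_apply, norm_mul, mul_pow, RCLike.norm_ofReal]
    exact mul_le_mul_of_nonneg_right
      (pow_le_pow_left₀ (abs_nonneg _) (hi j (Finset.mem_univ j)) 2) (sq_nonneg _)
  exact le_of_sq_le_sq (by simpa using hsq) (norm_nonneg _)

theorem Matrix.hasEigenvalue_toLin'_iff_toEuclideanLin {𝕜 n : Type*} [RCLike 𝕜] [Fintype n]
    [DecidableEq n] (A : Matrix n n 𝕜) (μ : 𝕜) :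
    HasEigenvalue (toLin' A) μ ↔ HasEigenvalue (toEuclideanLin A) μ := by
  rw [hasEigenvalue_iff_mem_spectrum, hasEigenvalue_iff_mem_spectrum, spectrum_toLpLin,
    ← AlgEquiv.spectrum_eq toLinAlgEquiv' A]
  rfl

theorem Matrix.IsHermitian.exists_hasEigenvalue_abs_mul_norm_le {𝕜 n : Type*} [RCLike 𝕜]
    [Fintype n] [DecidableEq n] [Nonempty n] {A : Matrix n n 𝕜} (hA : A.IsHermitian)
    (x : EuclideanSpace 𝕜 n) :
    ∃ μ : ℝ, HasEigenvalue (toLin' A) μ ∧ |μ| * ‖x‖ ≤ ‖toEuclideanLin A x‖ := by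
  obtain ⟨μ, hμ, hle⟩ :=
    (isSymmetric_toEuclideanLin_iff.mpr hA).exists_hasEigenvalue_abs_mul_norm_le x
  exact ⟨μ, (hasEigenvalue_toLin'_iff_toEuclideanLin A μ).mpr hμ, hle⟩

theorem iInf_norm_unit_mul_norm_le {E F : Type*} [NormedAddCommGroup E] [NormedSpace ℝ E]
    [SeminormedAddCommGroup F] [NormedSpace ℝ F] (f : E →ₗ[ℝ] F) (x : E) :
    (⨅ y : {y : E // ‖y‖ = 1}, ‖f y‖) * ‖x‖ ≤ ‖f x‖ := by
  rcases eq_or_ne x 0 with rfl | hx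
  · simp
  have hbdd : BddBelow (Set.range fun y : {y : E // ‖y‖ = 1} => ‖f y‖) :=
    ⟨0, by rintro _ ⟨y, rfl⟩; exact norm_nonneg _⟩
  calc (⨅ y : {y : E // ‖y‖ = 1}, ‖f y‖) * ‖x‖ ≤ ‖f (‖x‖⁻¹ • x)‖ * ‖x‖ := by
        gcongr
        exact ciInf_le hbdd ⟨_, norm_smul_inv_norm hx⟩
    _ = ‖f x‖ := by
        rw [map_smul, norm_smul, norm_inv, norm_norm]
        field_simp

def sshBond (v w : ℝ) (k : ℕ) : ℝ := if k % 2 = 0 then v else w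

lemma sshBond_two_mul (v w : ℝ) (k : ℕ) : sshBond v w (2 * k) = v := by
  simp [sshBond]

lemma sshBond_two_mul_add_one (v w : ℝ) (k : ℕ) : sshBond v w (2 * k + 1) = w := by
  simp [sshBond, Nat.add_mod]

lemma sshMatrix_apply (N : ℕ) (v w : ℝ) (i j : Fin (2 * N)) :
    sshMatrix N v w i j =
      (if (j : ℕ) = i + 1 then sshBond v w i else 0) +
        (if (i : ℕ) = j + 1 then sshBond v w j else 0) := by
  simp only [sshMatrix, of_apply, sshBond]
  split_ifs <;> first | omega | simp_all

lemma sshMatrix_isHermitian (N : ℕ) (v w : ℝ) : (sshMatrix N v w).IsHermitian := by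
  ext i j
  simp only [conjTranspose_apply, star_trivial, sshMatrix_apply]
  ring

lemma sshMatrix_mulVec_apply (N : ℕ) (v w : ℝ) (f : ℕ → ℝ) (i : Fin (2 * N)) :
    (sshMatrix N v w *ᵥ fun j => f j) i =
      (if (i : ℕ) + 1 < 2 * N then sshBond v w i * f (i + 1) else 0) +
        (if 0 < (i : ℕ) then sshBond v w (i - 1) * f (i - 1) else 0) := by
  simp only [mulVec, dotProduct, sshMatrix_apply, add_mul, ite_mul, zero_mul,
    Finset.sum_add_distrib]
  rw [Fin.sum_univ_eq_sum_range (fun j => if j = i + 1 then sshBond v w i * f j else 0),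
    Fin.sum_univ_eq_sum_range (fun j => if (i : ℕ) = j + 1 then sshBond v w j * f j else 0)]
  obtain ⟨i, hi⟩ := i
  cases i with
  | zero => simp
  | succ m => simp [Finset.sum_ite_eq', show m < 2 * N by omega]

def edgeProfile (r : ℝ) (j : ℕ) : ℝ := if j % 2 = 0 then r ^ (j / 2) else 0

lemma edgeProfile_two_mul (r : ℝ) (k : ℕ) : edgeProfile r (2 * k) = r ^ k := by
  simp [edgeProfile]

lemma sshMatrix_mulVec_edgeProfile (N : ℕ) {v w r : ℝ} (hr : v + w * r = 0)
    (i : Fin (2 * N)) :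
    (sshMatrix N v w *ᵥ fun j => edgeProfile r j) i =
      if (i : ℕ) + 1 = 2 * N then v * r ^ (N - 1) else 0 := by
  rw [sshMatrix_mulVec_apply]
  obtain ⟨k, hk | hk⟩ := Nat.even_or_odd' (i : ℕ) <;> rw [hk]
  · have hi := i.isLt
    simp only [edgeProfile]
    split_ifs <;> first | omega | simp
  · have hi := i.isLt
    rw [if_pos (show 0 < 2 * k + 1 by omega), Nat.add_sub_cancel,
      show 2 * k + 1 + 1 = 2 * (k + 1) by ring, sshBond_two_mul_add_one,
      sshBond_two_mul, edgeProfile_two_mul, edgeProfile_two_mul]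
    split_ifs with hlt hlast hlast
    · omega
    · linear_combination r ^ k * hr
    · rw [show N - 1 = k by omega, zero_add]
    · omega

lemma toEuclideanLin_sshMatrix_edgeProfile {N : ℕ} (hN : 0 < N) {v w r : ℝ}
    (hr : v + w * r = 0) :
    toEuclideanLin (sshMatrix N v w) (WithLp.toLp 2 fun j => edgeProfile r j) =
      EuclideanSpace.single ⟨2 * N - 1, by omega⟩ (v * r ^ (N - 1)) := by
  ext i
  simp only [toLpLin_toLp, toLin'_apply, sshMatrix_mulVec_edgeProfile N hr,
    PiLp.single_apply, Fin.ext_iff]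
  split_ifs <;> first | rfl | omega

lemma one_le_norm_edgeProfile {N : ℕ} (hN : 0 < N) (r : ℝ) :
    1 ≤ ‖(WithLp.toLp 2 fun j : Fin (2 * N) => edgeProfile r j)‖ := by
  simpa [edgeProfile] using
    PiLp.norm_apply_le (WithLp.toLp 2 fun j : Fin (2 * N) => edgeProfile r j) ⟨0, by omega⟩

lemma exists_norm_toEuclideanLin_sshMatrix_eq {N : ℕ} (hN : 0 < N) (v : ℝ) {w : ℝ}
    (hw : w ≠ 0) :
    ∃ x : EuclideanSpace ℝ (Fin (2 * N)), 1 ≤ ‖x‖ ∧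
      ‖toEuclideanLin (sshMatrix N v w) x‖ = |w| * (|v| / |w|) ^ N := by
  refine ⟨_, one_le_norm_edgeProfile hN (-v / w), ?_⟩
  rw [toEuclideanLin_sshMatrix_edgeProfile hN (by field_simp; ring), PiLp.norm_single,
    norm_mul, norm_pow, norm_div, norm_neg, Real.norm_eq_abs, Real.norm_eq_abs]
  obtain ⟨M, rfl⟩ : ∃ M, N = M + 1 := ⟨N - 1, by omega⟩
  rw [Nat.add_sub_cancel, pow_succ]
  field_simp

theorem ssh_near_zero_eigenvalue_general (v w : ℝ) (hw : w ≠ 0) (hvw : |v| < |w|) :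
    (∃ C : ℝ, 0 < C ∧ ∀ N : ℕ, 1 ≤ N → ∃ lam : ℝ,
        Module.End.HasEigenvalue (Matrix.toLin' (sshMatrix N v w)) lam ∧
        |lam| ≤ C * (|v| / |w|) ^ N) ∧
    Filter.Tendsto
      (fun N : ℕ =>
        ⨅ x : {x : EuclideanSpace ℝ (Fin (2 * N)) // ‖x‖ = 1},
          ‖Matrix.toEuclideanLin (sshMatrix N v w) x.1‖)
      Filter.atTop (nhds 0) := by
  refine ⟨⟨|w|, abs_pos.mpr hw, fun N hN => ?_⟩, ?_⟩
  · have : Nonempty (Fin (2 * N)) := ⟨⟨0, by omega⟩⟩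
    obtain ⟨x, hx, hAx⟩ := exists_norm_toEuclideanLin_sshMatrix_eq hN v hw
    obtain ⟨μ, hμ, hle⟩ := (sshMatrix_isHermitian N v w).exists_hasEigenvalue_abs_mul_norm_le x
    exact ⟨μ, hμ, hAx ▸ (le_mul_of_one_le_right (abs_nonneg μ) hx).trans hle⟩
  · have hρ : Filter.Tendsto (fun N : ℕ => |w| * (|v| / |w|) ^ N) Filter.atTop (nhds 0) := by
      simpa using (tendsto_pow_atTop_nhds_zero_of_lt_one (by positivity)
        ((div_lt_one (abs_pos.mpr hw)).mpr hvw)).const_mul |w|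
    refine tendsto_of_tendsto_of_tendsto_of_le_of_le' tendsto_const_nhds hρ
      (Filter.Eventually.of_forall fun N => Real.iInf_nonneg fun x => norm_nonneg _) ?_
    filter_upwards [Filter.eventually_ge_atTop 1] with N hN
    obtain ⟨x, hx, hAx⟩ := exists_norm_toEuclideanLin_sshMatrix_eq hN v hw
    exact hAx ▸ (le_mul_of_one_le_right (Real.iInf_nonneg fun _ => norm_nonneg _) hx).trans
      (iInf_norm_unit_mul_norm_le _ x)

/-- in the topological phase |v| < |w|, the finite SSH matrix has an
eigenvalue exponentially small in N (uniform constant C), and consequently its smallest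
singular value tends to 0 as N → ∞. -/
theorem ssh_near_zero_eigenvalue (v w : ℝ) (hv : v ≠ 0) (hw : w ≠ 0) (hvw : |v| < |w|) :
    (∃ C : ℝ, 0 < C ∧ ∀ N : ℕ, 1 ≤ N → ∃ lam : ℝ,
        Module.End.HasEigenvalue (Matrix.toLin' (sshMatrix N v w)) lam ∧
        |lam| ≤ C * (|v| / |w|) ^ N) ∧
    Filter.Tendsto
      (fun N : ℕ =>
        ⨅ x : {x : EuclideanSpace ℝ (Fin (2 * N)) // ‖x‖ = 1},
          ‖Matrix.toEuclideanLin (sshMatrix N v w) x.1‖)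
      Filter.atTop (nhds 0) :=
  ssh_near_zero_eigenvalue_general v w hw hvw
end
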